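/- Let d ≥ 1, N ≥ 1. For i = 1,…,N let q_i and r_i be joint probability distributions on (ZMod d) × (ZMod d) (nonnegative, summing to 1), where q_i represents outcomes (X_i, Y_i) and r_i represents outcomes (X_{i+1}, Y_i); assume the marginal consistency conditions: the second-coordinate marginal of r_i equals the second-coordinate marginal of q_i for all i; the first-coordinate marginal of r_i equals the first-coordinate marginal of q_{i+1} for i = 1,…,N−1; and the first-coordinate marginal of r_N equals the pushforward of the first-coordinate marginal of q_1 under the map x ↦ x + 1 on ZMod d (i.e., X_{N+1} := X_1 + 1 mod d). Then for every i ∈ {1,…,N} and every x ∈ ZMod d: Σ_{j=1}^{N} ( E_{q_j}[val(X−Y)] + E_{r_j}[val(Y−X)] ) ≥ |P_i(x) − P_i(x+1)|, where P_i is the first-coordinate marginal of q_i and val : ZMod d → ℕ is the canonical representative in {0,…,d−1}. -/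
import Mathlib


open Finset


lemma marg_fst (d : ℕ) [NeZero d] (π : ZMod d × ZMod d → ℝ) (x : ZMod d) :
    (∑ y, π (x, y)) = ∑ w : ZMod d × ZMod d, (if w.1 = x then π w else 0) := by
  rw [Fintype.sum_prod_type]
  have h : ∀ a : ZMod d, (∑ b, if a = x then π (a, b) else 0) = if a = x then ∑ b, π (a, b) else 0 := by
    intro a; split_ifs <;> simp
  simp_rw [h, Finset.sum_ite_eq' Finset.univ x fun a => ∑ b, π (a, b), Finset.mem_univ, if_true]

lemma marg_snd (d : ℕ) [NeZero d] (π : ZMod d × ZMod d → ℝ) (x : ZMod d) :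
    (∑ z, π (z, x)) = ∑ w : ZMod d × ZMod d, (if w.2 = x then π w else 0) := by
  rw [Fintype.sum_prod_type]
  congr 1; ext a
  simp [Finset.sum_ite_eq' Finset.univ x fun b => π (a, b)]

lemma link_aux (d : ℕ) [NeZero d] (π : ZMod d × ZMod d → ℝ) (hnn : ∀ w, 0 ≤ π w)
    (c : ZMod d × ZMod d → ℝ) (hc0 : ∀ w, 0 ≤ c w) (hc1 : ∀ w, w.1 ≠ w.2 → 1 ≤ c w)
    (x : ZMod d) :
    |(∑ y, π (x, y)) - (∑ z, π (z, x))| ≤ ∑ w : ZMod d × ZMod d, c w * π w := by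
  rw [marg_fst, marg_snd, ← Finset.sum_sub_distrib]
  refine (Finset.abs_sum_le_sum_abs _ _).trans (Finset.sum_le_sum fun w _ => ?_)
  by_cases h : w.1 = w.2
  · rw [h]
    simp [abs_of_nonneg, mul_nonneg (hc0 w) (hnn w)]
  · have h1 : |(if w.1 = x then π w else 0) - (if w.2 = x then π w else 0)| ≤ π w := by
      have := hnn w
      split_ifs <;> simp [abs_of_nonneg, abs_of_nonpos, this]
    refine h1.trans ?_
    calc π w = 1 * π w := (one_mul _).symm
    _ ≤ c w * π w := mul_le_mul_of_nonneg_right (hc1 w h) (hnn w)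

/-- The chained estimate (A3): given joint distributions `q i` for outcomes `(Xᵢ, Yᵢ)` and
`r i` for outcomes `(Xᵢ₊₁, Yᵢ)` (with `X_{N+1} := X₁ + 1` mod `d`), satisfying the marginal
consistency conditions, the chained Bell quantity bounds `|Pᵢ(x) − Pᵢ(x+1)|` for each `i, x`. -/
theorem chained_estimate (d N : ℕ) [NeZero d] (hN : 0 < N)
    (q r : Fin N → (ZMod d × ZMod d → ℝ))
    (hqnn : ∀ i w, 0 ≤ q i w) (hqsum : ∀ i, ∑ w, q i w = 1)
    (hrnn : ∀ i w, 0 ≤ r i w) (hrsum : ∀ i, ∑ w, r i w = 1)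
    -- second-coordinate marginal of `r i` equals that of `q i`
    (hsnd : ∀ (i : Fin N) (y : ZMod d), ∑ x, r i (x, y) = ∑ x, q i (x, y))
    -- first-coordinate marginal of `r i` equals that of `q (i+1)`, for `i = 1, …, N−1`
    (hfst : ∀ i j : Fin N, (j : ℕ) = (i : ℕ) + 1 →
      ∀ x : ZMod d, ∑ y, r i (x, y) = ∑ y, q j (x, y))
    -- first-coordinate marginal of `r N` is the `x ↦ x + 1` pushforward of that of `q 1`
    (hlast : ∀ x : ZMod d,
      ∑ y, r ⟨N - 1, by omega⟩ (x, y) = ∑ y, q ⟨0, hN⟩ (x - 1, y)) :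
    ∀ (i : Fin N) (x : ZMod d),
      |(∑ y, q i (x, y)) - (∑ y, q i (x + 1, y))| ≤
        ∑ j : Fin N,
          ((∑ w : ZMod d × ZMod d, ((w.1 - w.2).val : ℝ) * q j w) +
           (∑ w : ZMod d × ZMod d, ((w.2 - w.1).val : ℝ) * r j w)) := by
  intro i x
  haveI : NeZero N := ⟨hN.ne'⟩
  set B : Fin N → ℝ := fun j =>
    (∑ w : ZMod d × ZMod d, ((w.1 - w.2).val : ℝ) * q j w) +
    (∑ w : ZMod d × ZMod d, ((w.2 - w.1).val : ℝ) * r j w) with hB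
  -- single chain step
  have hstep : ∀ (j : Fin N) (a : ZMod d),
      |(∑ y, q j (a, y)) - (∑ y, r j (a, y))| ≤ B j := by
    intro j a
    have hval : ∀ u v : ZMod d, u ≠ v → (1 : ℝ) ≤ ((u - v).val : ℕ) := by
      intro u v huv
      have : u - v ≠ 0 := sub_ne_zero.mpr huv
      have : (u - v).val ≠ 0 := fun h => this ((ZMod.val_eq_zero _).mp h)
      exact_mod_cast Nat.one_le_iff_ne_zero.mpr this
    have h1 := link_aux d (q j) (hqnn j) (fun w => ((w.1 - w.2).val : ℝ))
      (fun w => by positivity) (fun w hw => hval _ _ hw) a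
    have h2 := link_aux d (r j) (hrnn j) (fun w => ((w.2 - w.1).val : ℝ))
      (fun w => by positivity) (fun w hw => hval _ _ (Ne.symm hw)) a
    calc |(∑ y, q j (a, y)) - (∑ y, r j (a, y))|
        ≤ |(∑ y, q j (a, y)) - (∑ z, q j (z, a))| +
          |(∑ z, q j (z, a)) - (∑ y, r j (a, y))| := abs_sub_le _ _ _
      _ ≤ B j := by
          have h3 : |(∑ z, q j (z, a)) - (∑ y, r j (a, y))|
              = |(∑ y, r j (a, y)) - (∑ z, r j (z, a))| := by
            rw [← hsnd j a, abs_sub_comm]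
          rw [h3]; exact add_le_add h1 h2
  set g : ℕ → ℝ := fun k =>
    ∑ y, q ⟨((i : ℕ) + k) % N, Nat.mod_lt _ hN⟩
      ((if (i : ℕ) + k < N then x + 1 else x), y) with hg
  have hg0 : g 0 = ∑ y, q i (x + 1, y) := by
    simp only [hg, Nat.add_zero, Nat.mod_eq_of_lt i.isLt, if_pos i.isLt, Fin.eta]
  have hgN : g N = ∑ y, q i (x, y) := by
    have h1 : ((i : ℕ) + N) % N = (i : ℕ) := by
      rw [Nat.add_mod_right, Nat.mod_eq_of_lt i.isLt]
    have h2 : ¬ ((i : ℕ) + N < N) := by omega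
    simp only [hg, if_neg h2]
    have hi : (⟨((i : ℕ) + N) % N, Nat.mod_lt _ hN⟩ : Fin N) = i :=
      Fin.ext (show ((i : ℕ) + N) % N = (i : ℕ) from h1)
    rw [hi]
  have hstepk : ∀ k, k < N → |g k - g (k + 1)| ≤ B ⟨((i : ℕ) + k) % N, Nat.mod_lt _ hN⟩ := by
    intro k hk
    have hik : (i : ℕ) + k ≤ 2 * N - 2 := by have := i.isLt; omega
    by_cases hA : (i : ℕ) + k + 1 < N
    · -- no wrap, before shift
      have e1 : g k = ∑ y, q ⟨(i : ℕ) + k, by omega⟩ (x + 1, y) := by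
        simp only [hg, Nat.mod_eq_of_lt (show (i:ℕ) + k < N by omega), if_pos (show (i:ℕ) + k < N by omega)]
      have e2 : g (k + 1) = ∑ y, q ⟨(i : ℕ) + k + 1, hA⟩ (x + 1, y) := by
        simp only [hg, ← Nat.add_assoc, Nat.mod_eq_of_lt hA, if_pos hA]
      have e3 : (∑ y, q (⟨(i : ℕ) + k + 1, hA⟩ : Fin N) (x + 1, y))
          = ∑ y, r ⟨(i : ℕ) + k, by omega⟩ (x + 1, y) :=
        (hfst ⟨(i : ℕ) + k, by omega⟩ ⟨(i : ℕ) + k + 1, hA⟩ rfl (x + 1)).symm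
      have hBidx : (⟨((i : ℕ) + k) % N, Nat.mod_lt _ hN⟩ : Fin N) = ⟨(i : ℕ) + k, by omega⟩ :=
        Fin.ext (Nat.mod_eq_of_lt (by omega))
      rw [e1, e2, e3, hBidx]
      exact hstep ⟨(i : ℕ) + k, by omega⟩ (x + 1)
    · by_cases hBc : (i : ℕ) + k + 1 = N
      · -- wrap step
        have hlt : (i : ℕ) + k < N := by omega
        have e1 : g k = ∑ y, q ⟨(i : ℕ) + k, hlt⟩ (x + 1, y) := by
          simp only [hg, Nat.mod_eq_of_lt hlt, if_pos hlt]
        have e2 : g (k + 1) = ∑ y, q ⟨0, hN⟩ (x, y) := by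
          have h1 : ((i : ℕ) + (k + 1)) % N = 0 := by
            rw [← Nat.add_assoc, hBc, Nat.mod_self]
          have h2 : ¬ ((i : ℕ) + (k + 1) < N) := by omega
          simp only [hg, if_neg h2]
          have hi : (⟨((i : ℕ) + (k + 1)) % N, Nat.mod_lt _ hN⟩ : Fin N) = ⟨0, hN⟩ :=
            Fin.ext (show ((i : ℕ) + (k + 1)) % N = 0 from h1)
          rw [hi]
        have e3 : (⟨(i : ℕ) + k, hlt⟩ : Fin N) = ⟨N - 1, by omega⟩ :=
          Fin.ext (show (i : ℕ) + k = N - 1 by omega)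
        have e4 : (∑ y, q (⟨0, hN⟩ : Fin N) (x, y))
            = ∑ y, r ⟨N - 1, by omega⟩ (x + 1, y) := by
          rw [hlast (x + 1)]
          simp
        have hBidx : (⟨((i : ℕ) + k) % N, Nat.mod_lt _ hN⟩ : Fin N) = ⟨N - 1, by omega⟩ :=
          Fin.ext (show ((i : ℕ) + k) % N = N - 1 by rw [Nat.mod_eq_of_lt hlt]; omega)
        rw [e1, e2, e3, e4, hBidx]
        exact hstep ⟨N - 1, by omega⟩ (x + 1)
      · -- after wrap
        have hge : N ≤ (i : ℕ) + k := by omega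
        have h1 : ((i : ℕ) + k) % N = (i : ℕ) + k - N := by
          rw [Nat.mod_eq_sub_mod hge, Nat.mod_eq_of_lt (by omega)]
        have h1' : ((i : ℕ) + (k + 1)) % N = (i : ℕ) + k + 1 - N := by
          rw [Nat.mod_eq_sub_mod (by omega), Nat.mod_eq_of_lt (by omega)]
          omega
        have e1 : g k = ∑ y, q ⟨(i : ℕ) + k - N, by omega⟩ (x, y) := by
          simp only [hg, h1, if_neg (show ¬ ((i:ℕ) + k < N) by omega)]
        have e2 : g (k + 1) = ∑ y, q ⟨(i : ℕ) + k + 1 - N, by omega⟩ (x, y) := by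
          simp only [hg, h1', if_neg (show ¬ ((i:ℕ) + (k + 1) < N) by omega)]
        have e3 : (∑ y, q (⟨(i : ℕ) + k + 1 - N, by omega⟩ : Fin N) (x, y))
            = ∑ y, r ⟨(i : ℕ) + k - N, by omega⟩ (x, y) :=
          (hfst ⟨(i : ℕ) + k - N, by omega⟩ ⟨(i : ℕ) + k + 1 - N, by omega⟩ (by simp; omega) x).symm
        have hBidx : (⟨((i : ℕ) + k) % N, Nat.mod_lt _ hN⟩ : Fin N)
            = ⟨(i : ℕ) + k - N, by omega⟩ := Fin.ext h1
        rw [e1, e2, e3, hBidx]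
        exact hstep ⟨(i : ℕ) + k - N, by omega⟩ x
  have htel : |g 0 - g N| ≤ ∑ k ∈ Finset.range N, B ⟨((i : ℕ) + k) % N, Nat.mod_lt _ hN⟩ := by
    rw [← Finset.sum_range_sub' g N]
    refine (Finset.abs_sum_le_sum_abs _ _).trans (Finset.sum_le_sum fun k hk => ?_)
    exact hstepk k (Finset.mem_range.mp hk)
  have hre : ∑ k ∈ Finset.range N, B ⟨((i : ℕ) + k) % N, Nat.mod_lt _ hN⟩ = ∑ j : Fin N, B j := by
    rw [← Fin.sum_univ_eq_sum_range]
    have h1 : ∀ k : Fin N, (⟨((i : ℕ) + (k : ℕ)) % N, Nat.mod_lt _ hN⟩ : Fin N) = i + k := by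
      intro k; exact Fin.ext (by rw [Fin.val_add])
    simp_rw [h1]
    exact Fintype.sum_equiv (Equiv.addLeft i) _ _ (fun k => rfl)
  rw [abs_sub_comm, ← hg0, ← hgN]
  exact htel.trans (le_of_eq hre)
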